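/- Explicit MIO dilution map: let ρ' be a state, δ an incoherent state, and M ≥ 2 an integer with ρ' ≤ Mδ in the Loewner order. Then the map Λ(ω) = (M/(M−1))[(Tr[Ψ_M ω] − 1/M)ρ' + (1 − Tr[Ψ_M ω])δ] is completely positive and trace preserving, maps every incoherent state to an incoherent state, and satisfies Λ(Ψ_M) = ρ'. -/

import Mathlib

open scoped Matrix ComplexOrder

namespace OneShot

variable {ι κ : Type*} [Fintype ι] [DecidableEq ι] [Fintype κ] [DecidableEq κ]

/-- A quantum state: a positive semidefinite matrix with unit trace. -/
def IsState (ρ : Matrix ι ι ℂ) : Prop := ρ.PosSemidef ∧ ρ.trace = 1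

/-- An incoherent state: a state that is diagonal in the computational basis. -/
def IsIncoherent (ρ : Matrix ι ι ℂ) : Prop := IsState ρ ∧ ρ.IsDiag

/-- The completely dephasing channel `Δ`. -/
def dephase (ρ : Matrix ι ι ℂ) : Matrix ι ι ℂ := Matrix.diagonal fun i => ρ i i

/-- The max-relative entropy of coherence
`C_max(ρ) = min_{δ ∈ 𝓘} D_max(ρ‖δ) = log₂ min {λ ≥ 0 | ∃ δ ∈ 𝓘, ρ ≤ λ δ}`. -/
noncomputable def Cmax (ρ : Matrix ι ι ℂ) : ℝ :=
  Real.logb 2 (sInf {l : ℝ | 0 ≤ l ∧ ∃ δ, IsIncoherent δ ∧ (l • δ - ρ).PosSemidef})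

/-- `C_{Δ,max}(ρ) = log₂ min {λ ≥ 0 | ρ ≤ λ Δ(ρ)}`. -/
noncomputable def CDmax (ρ : Matrix ι ι ℂ) : ℝ :=
  Real.logb 2 (sInf {l : ℝ | 0 ≤ l ∧ (l • dephase ρ - ρ).PosSemidef})

/-- Complete positivity of a linear map on matrices. -/
def CompletelyPositive (Λ : Matrix ι ι ℂ →ₗ[ℂ] Matrix κ κ ℂ) : Prop :=
  ∀ (k : ℕ) (M : Matrix (Fin k × ι) (Fin k × ι) ℂ), M.PosSemidef →
    (Matrix.of fun p q : Fin k × κ =>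
      Λ (Matrix.of fun x y => M (p.1, x) (q.1, y)) p.2 q.2).PosSemidef

/-- Trace preservation. -/
def TracePreserving (Λ : Matrix ι ι ℂ →ₗ[ℂ] Matrix κ κ ℂ) : Prop :=
  ∀ A, (Λ A).trace = A.trace

/-- A maximally incoherent operation (MIO): a CPTP map sending every incoherent state
to an incoherent state. -/
def IsMIO (Λ : Matrix ι ι ℂ →ₗ[ℂ] Matrix κ κ ℂ) : Prop :=
  CompletelyPositive Λ ∧ TracePreserving Λ ∧ ∀ δ, IsIncoherent δ → IsIncoherent (Λ δ)

/-- A dephasing-covariant incoherent operation (DIO): a CPTP map commuting with `Δ`. -/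
def IsDIO (Λ : Matrix ι ι ℂ →ₗ[ℂ] Matrix ι ι ℂ) : Prop :=
  CompletelyPositive Λ ∧ TracePreserving Λ ∧ ∀ ρ, Λ (dephase ρ) = dephase (Λ ρ)

/-- An incoherent-preserving (Kraus) operator: `K δ Kᴴ` is a nonnegative multiple of an
incoherent state, for every incoherent state `δ`. -/
def IncoherentPreserving (K : Matrix κ ι ℂ) : Prop :=
  ∀ δ : Matrix ι ι ℂ, IsIncoherent δ →
    ∃ c : ℝ, 0 ≤ c ∧ ∃ δ' : Matrix κ κ ℂ, IsIncoherent δ' ∧ K * δ * Kᴴ = (c : ℂ) • δ'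

/-- An incoherent operation (IO). -/
def IsIO (Λ : Matrix ι ι ℂ →ₗ[ℂ] Matrix κ κ ℂ) : Prop :=
  ∃ (N : ℕ) (K : Fin N → Matrix κ ι ℂ),
    (∀ n, IncoherentPreserving (K n)) ∧ (∑ n, (K n)ᴴ * K n = 1) ∧
    ∀ ρ, Λ ρ = ∑ n, K n * ρ * (K n)ᴴ

/-- A strictly incoherent operation (SIO). -/
def IsSIO (Λ : Matrix ι ι ℂ →ₗ[ℂ] Matrix κ κ ℂ) : Prop :=
  ∃ (N : ℕ) (K : Fin N → Matrix κ ι ℂ),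
    (∀ n, IncoherentPreserving (K n)) ∧ (∀ n, IncoherentPreserving (K n)ᴴ) ∧
    (∑ n, (K n)ᴴ * K n = 1) ∧ ∀ ρ, Λ ρ = ∑ n, K n * ρ * (K n)ᴴ

/-- The outer product `|ψ⟩⟨ψ|`. -/
def outer (ψ : ι → ℂ) : Matrix ι ι ℂ := Matrix.of fun i j => ψ i * star (ψ j)

/-- `T ψ` is the number of nonzero computational-basis coefficients of `ψ`. -/
noncomputable def T (ψ : ι → ℂ) : ℕ := (Finset.univ.filter fun i => ψ i ≠ 0).card

/-- A finite pure-state decomposition `ρ = Σ_j p_j |ψ_j⟩⟨ψ_j|`. -/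
def IsDecomposition (ρ : Matrix ι ι ℂ) (n : ℕ) (p : Fin n → ℝ) (ψ : Fin n → ι → ℂ) : Prop :=
  (∀ j, 0 < p j) ∧ (∑ j, p j = 1) ∧ (∀ j, ∑ i, Complex.normSq (ψ j i) = 1) ∧
    ρ = ∑ j, p j • outer (ψ j)

/-- `C_0(ρ) = min over decompositions of max_j log₂ T(ψ_j)`. -/
noncomputable def C0 (ρ : Matrix ι ι ℂ) : ℝ :=
  sInf { r | ∃ n p ψ, IsDecomposition ρ n p ψ ∧
    r = Real.logb 2 (↑(Finset.univ.sup fun j => T (ψ j)) : ℝ) }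

/-- Matrix square root of a positive semidefinite matrix (junk value `0` elsewhere). -/
noncomputable def msqrt (A : Matrix ι ι ℂ) : Matrix ι ι ℂ :=
  letI := Classical.propDecidable A.PosSemidef
  if h : A.PosSemidef then
    (h.1.eigenvectorUnitary : Matrix ι ι ℂ) *
      Matrix.diagonal (fun i => (Real.sqrt (h.1.eigenvalues i) : ℂ)) *
      (star h.1.eigenvectorUnitary : Matrix ι ι ℂ)
  else 0

/-- Uhlmann fidelity `F(ρ,σ) = (Tr √(√ρ σ √ρ))²`. -/
noncomputable def Fid (ρ σ : Matrix ι ι ℂ) : ℝ :=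
  ((msqrt (msqrt ρ * σ * msqrt ρ)).trace.re) ^ 2

/-- Smoothed `C_max`. -/
noncomputable def Cmaxeps (ρ : Matrix ι ι ℂ) (ε : ℝ) : ℝ :=
  sInf { r | ∃ ρ', IsState ρ' ∧ 1 - ε ≤ Fid ρ ρ' ∧ r = Cmax ρ' }

/-- Smoothed `C_{Δ,max}`. -/
noncomputable def CDmaxeps (ρ : Matrix ι ι ℂ) (ε : ℝ) : ℝ :=
  sInf { r | ∃ ρ', IsState ρ' ∧ 1 - ε ≤ Fid ρ ρ' ∧ r = CDmax ρ' }

/-- Smoothed `C_0`. -/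
noncomputable def C0eps (ρ : Matrix ι ι ℂ) (ε : ℝ) : ℝ :=
  sInf { r | ∃ ρ', IsState ρ' ∧ 1 - ε ≤ Fid ρ ρ' ∧ r = C0 ρ' }

/-- The maximally coherent state `Ψ_M = |Ψ_M⟩⟨Ψ_M|` of dimension `M`. -/
noncomputable def PsiM (M : ℕ) : Matrix (Fin M) (Fin M) ℂ := Matrix.of fun _ _ => (1 : ℂ) / M

/-- One-shot coherence cost under MIO. -/
noncomputable def CMIOeps (ρ : Matrix ι ι ℂ) (ε : ℝ) : ℝ :=
  sInf { r | ∃ M : ℕ, 1 ≤ M ∧ r = Real.logb 2 M ∧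
    ∃ Λ : Matrix (Fin M) (Fin M) ℂ →ₗ[ℂ] Matrix ι ι ℂ, IsMIO Λ ∧ 1 - ε ≤ Fid ρ (Λ (PsiM M)) }

/-- One-shot coherence cost under DIO. -/
noncomputable def CDIOeps (ρ : Matrix ι ι ℂ) (ε : ℝ) : ℝ :=
  sInf { r | ∃ M : ℕ, 1 ≤ M ∧ r = Real.logb 2 M ∧
    ∃ Λ : Matrix (Fin M) (Fin M) ℂ →ₗ[ℂ] Matrix ι ι ℂ,
      CompletelyPositive Λ ∧ TracePreserving Λ ∧ (∀ ω, Λ (dephase ω) = dephase (Λ ω)) ∧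
      1 - ε ≤ Fid ρ (Λ (PsiM M)) }

/-- One-shot coherence cost under IO. -/
noncomputable def CIOeps (ρ : Matrix ι ι ℂ) (ε : ℝ) : ℝ :=
  sInf { r | ∃ M : ℕ, 1 ≤ M ∧ r = Real.logb 2 M ∧
    ∃ Λ : Matrix (Fin M) (Fin M) ℂ →ₗ[ℂ] Matrix ι ι ℂ, IsIO Λ ∧ 1 - ε ≤ Fid ρ (Λ (PsiM M)) }

/-- One-shot coherence cost under SIO. -/
noncomputable def CSIOeps (ρ : Matrix ι ι ℂ) (ε : ℝ) : ℝ :=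
  sInf { r | ∃ M : ℕ, 1 ≤ M ∧ r = Real.logb 2 M ∧
    ∃ Λ : Matrix (Fin M) (Fin M) ℂ →ₗ[ℂ] Matrix ι ι ℂ, IsSIO Λ ∧ 1 - ε ≤ Fid ρ (Λ (PsiM M)) }

/-- Matrix logarithm (base 2) via the spectral decomposition, with `log₂ 0 = 0` junk
convention on the kernel, and junk value `0` on non-Hermitian matrices. -/
noncomputable def mlog2 (A : Matrix ι ι ℂ) : Matrix ι ι ℂ :=
  letI := Classical.propDecidable A.IsHermitian
  if h : A.IsHermitian then
    (h.eigenvectorUnitary : Matrix ι ι ℂ) *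
      Matrix.diagonal (fun i => (Real.logb 2 (h.eigenvalues i) : ℂ)) *
      (h.eigenvectorUnitary : Matrix ι ι ℂ)ᴴ
  else 0

/-- The relative entropy of coherence `C_r(ρ) = min_{δ ∈ 𝓘} S(ρ‖δ)`, where the minimum
is (equivalently) restricted to those `δ` whose support contains the support of `ρ`,
on which `S(ρ‖δ) = Tr[ρ (log₂ ρ − log₂ δ)]` is finite. -/
noncomputable def Cr (ρ : Matrix ι ι ℂ) : ℝ :=
  sInf { r | ∃ δ, IsIncoherent δ ∧ (∀ v : ι → ℂ, δ.mulVec v = 0 → ρ.mulVec v = 0) ∧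
    r = ((ρ * (mlog2 ρ - mlog2 δ)).trace).re }

/-- Von Neumann entropy (base 2). -/
noncomputable def vN (σ : Matrix ι ι ℂ) : ℝ := -((σ * mlog2 σ).trace.re)

/-- The coherence of formation. -/
noncomputable def Cf (ρ : Matrix ι ι ℂ) : ℝ :=
  sInf { r | ∃ n p ψ, IsDecomposition ρ n p ψ ∧
    r = ∑ j, p j * vN (dephase (outer (ψ j))) }

/-- The set `A_ρ = { (1/t)[(1+t)Δ(ρ) − ρ] : t > 0, (1+t)Δ(ρ) − ρ ≥ 0 }`. -/
def Aset (ρ : Matrix ι ι ℂ) : Set (Matrix ι ι ℂ) :=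
  { σ | ∃ t : ℝ, 0 < t ∧ ((1 + t) • dephase ρ - ρ).PosSemidef ∧
      σ = t⁻¹ • ((1 + t) • dephase ρ - ρ) }

/-- The `n`-fold tensor power `ρ^{⊗ n}`. -/
def tpow (ρ : Matrix ι ι ℂ) (n : ℕ) : Matrix (Fin n → ι) (Fin n → ι) ℂ :=
  Matrix.of fun i j => ∏ t, ρ (i t) (j t)

/-!
The map is the measure-and-prepare channel
`Λ ω = Tr[Ψ_M ω] ρ' + Tr[(1 - Ψ_M) ω] σ`, `σ = (M δ - ρ') / (M - 1)`,
and `ρ' ≤ M δ` says exactly that `σ` is a state. Since `Ψ_M` is a projection, both `Ψ_M` and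
`1 - Ψ_M` are positive and sum to `1`, so `Λ` is completely positive (the Choi-type block matrix
of `ω ↦ Tr[A ω] X` is a Kronecker product of positive matrices) and trace preserving.
Every incoherent state `ω` has `Tr[Ψ_M ω] = 1/M`, and for that value the two terms recombine
to `Λ ω = δ`; on `Ψ_M` itself `Tr[Ψ_M Ψ_M] = 1` gives `Λ Ψ_M = ρ'`.
-/

section CompletelyPositive

variable {m n : Type*}

theorem CompletelyPositive.add {Λ₁ Λ₂ : Matrix m m ℂ →ₗ[ℂ] Matrix n n ℂ}
    (h₁ : CompletelyPositive Λ₁) (h₂ : CompletelyPositive Λ₂) :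
    CompletelyPositive (Λ₁ + Λ₂) :=
  fun k M hM => (h₁ k M hM).add (h₂ k M hM)

variable [Fintype m]

theorem posSemidef_trace_mul_blocks {β : Type*} [Fintype β] [DecidableEq β]
    {A : Matrix m m ℂ} (hA : A.PosSemidef) {M : Matrix (β × m) (β × m) ℂ} (hM : M.PosSemidef) :
    (Matrix.of fun a b : β => (A * Matrix.of fun x y => M (a, x) (b, y)).trace).PosSemidef := by
  -- `Tr[A M_ab]` sums the `(a, b)` block of the Schur product of `M` with `Aᵀ` on the second
  -- factor; `V` performs that summation.
  let V : Matrix β (β × m) ℂ := Matrix.of fun a p => if p.1 = a then 1 else 0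
  have hW : (M ⊙ Aᵀ.submatrix Prod.snd Prod.snd).PosSemidef :=
    hM.hadamard (hA.transpose.submatrix Prod.snd)
  convert hW.mul_mul_conjTranspose_same V using 1
  ext a b
  simp [V, Matrix.trace, Matrix.mul_apply, Fintype.sum_prod_type, Matrix.conjTranspose_apply,
    mul_comm]

noncomputable def measurePrepare (A : Matrix m m ℂ) (X : Matrix n n ℂ) :
    Matrix m m ℂ →ₗ[ℂ] Matrix n n ℂ where
  toFun ω := (A * ω).trace • X
  map_add' ω₁ ω₂ := by simp [Matrix.mul_add, add_smul]
  map_smul' c ω := by simp [mul_smul]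

@[simp]
theorem measurePrepare_apply (A : Matrix m m ℂ) (X : Matrix n n ℂ) (ω : Matrix m m ℂ) :
    measurePrepare A X ω = (A * ω).trace • X := rfl

variable [Fintype n]

theorem completelyPositive_measurePrepare {A : Matrix m m ℂ} {X : Matrix n n ℂ}
    (hA : A.PosSemidef) (hX : X.PosSemidef) : CompletelyPositive (measurePrepare A X) :=
  fun _ _ hM => (posSemidef_trace_mul_blocks hA hM).kronecker hX

end CompletelyPositive

section MaximallyCoherent

variable {M : ℕ}

@[simp]
theorem PsiM_apply (i j : Fin M) : PsiM M i j = 1 / M := rfl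

theorem trace_PsiM (hM : M ≠ 0) : (PsiM M).trace = 1 := by
  simp [Matrix.trace, hM]

theorem PsiM_mul_self : PsiM M * PsiM M = PsiM M := by
  ext i j
  have : (M : ℂ) ≠ 0 := Nat.cast_ne_zero.mpr (Fin.pos i).ne'
  simp [Matrix.mul_apply, this]

theorem isStarProjection_PsiM : IsStarProjection (PsiM M) where
  isIdempotentElem := PsiM_mul_self
  isSelfAdjoint := by ext; simp [Matrix.star_apply]

open scoped MatrixOrder in
theorem posSemidef_PsiM : (PsiM M).PosSemidef :=
  Matrix.nonneg_iff_posSemidef.mp isStarProjection_PsiM.nonneg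

open scoped MatrixOrder in
theorem posSemidef_one_sub_PsiM : (1 - PsiM M).PosSemidef :=
  Matrix.nonneg_iff_posSemidef.mp isStarProjection_PsiM.one_sub.nonneg

theorem trace_PsiM_mul_of_isDiag {ω : Matrix (Fin M) (Fin M) ℂ} (hω : ω.IsDiag) :
    (PsiM M * ω).trace = ω.trace / M := by
  rw [← hω.diagonal_diag]
  simp [Matrix.trace, div_eq_inv_mul, Finset.mul_sum]

end MaximallyCoherent

section DilutionMap

variable {n : Type*} {M : ℕ} (ρ' δ : Matrix n n ℂ)

noncomputable def dilutionComplement (M : ℕ) : Matrix n n ℂ :=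
  ((M : ℝ) - 1)⁻¹ • ((M : ℝ) • δ - ρ')

noncomputable def dilutionMap (M : ℕ) : Matrix (Fin M) (Fin M) ℂ →ₗ[ℂ] Matrix n n ℂ :=
  measurePrepare (PsiM M) ρ' + measurePrepare (1 - PsiM M) (dilutionComplement ρ' δ M)

variable {ρ' δ}

theorem posSemidef_dilutionComplement (hM : 1 < M) (hle : ((M : ℝ) • δ - ρ').PosSemidef) :
    (dilutionComplement ρ' δ M).PosSemidef :=
  hle.smul (inv_nonneg.mpr (sub_nonneg.mpr (by exact_mod_cast hM.le)))

theorem trace_dilutionComplement [Fintype n] (hM : 1 < M) (hρ' : ρ'.trace = 1) (hδ : δ.trace = 1) :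
    (dilutionComplement ρ' δ M).trace = 1 := by
  have : (M : ℂ) - 1 ≠ 0 := sub_ne_zero.mpr (by exact_mod_cast hM.ne')
  rw [dilutionComplement, Matrix.trace_smul, Matrix.trace_sub, Matrix.trace_smul, hρ', hδ,
    Complex.real_smul, Complex.real_smul]
  push_cast
  field_simp

theorem dilutionMap_apply (ω : Matrix (Fin M) (Fin M) ℂ) :
    dilutionMap ρ' δ M ω
      = (PsiM M * ω).trace • ρ' + (ω.trace - (PsiM M * ω).trace) • dilutionComplement ρ' δ M := by
  simp [dilutionMap, Matrix.sub_mul]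

theorem completelyPositive_dilutionMap [Fintype n] (hρ' : ρ'.PosSemidef)
    (hσ : (dilutionComplement ρ' δ M).PosSemidef) : CompletelyPositive (dilutionMap ρ' δ M) :=
  (completelyPositive_measurePrepare posSemidef_PsiM hρ').add
    (completelyPositive_measurePrepare posSemidef_one_sub_PsiM hσ)

theorem tracePreserving_dilutionMap [Fintype n] (hM : 1 < M) (hρ' : ρ'.trace = 1) (hδ : δ.trace = 1) :
    TracePreserving (dilutionMap ρ' δ M) := by
  intro ω
  simp [dilutionMap_apply, Matrix.trace_add, hρ', trace_dilutionComplement hM hρ' hδ]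

theorem dilutionMap_apply_of_trace_eq_one (hM : 1 < M) {ω : Matrix (Fin M) (Fin M) ℂ}
    (hω : ω.trace = 1) :
    dilutionMap ρ' δ M ω = ((M : ℂ) / ((M : ℂ) - 1)) •
      (((PsiM M * ω).trace - 1 / (M : ℂ)) • ρ' + (1 - (PsiM M * ω).trace) • δ) := by
  have hM₀ : (M : ℂ) ≠ 0 := by positivity
  have hM₁ : (M : ℂ) - 1 ≠ 0 := sub_ne_zero.mpr (by exact_mod_cast hM.ne')
  rw [dilutionMap_apply, hω, dilutionComplement]
  match_scalars <;> field_simp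
  ring

theorem dilutionMap_apply_of_isDiag (hM : 1 < M) {ω : Matrix (Fin M) (Fin M) ℂ}
    (hdiag : ω.IsDiag) (hω : ω.trace = 1) : dilutionMap ρ' δ M ω = δ := by
  have hM₀ : (M : ℂ) ≠ 0 := by positivity
  have hM₁ : (M : ℂ) - 1 ≠ 0 := sub_ne_zero.mpr (by exact_mod_cast hM.ne')
  rw [dilutionMap_apply, hω, trace_PsiM_mul_of_isDiag hdiag, hω, dilutionComplement]
  match_scalars <;> field_simp
  ring

theorem dilutionMap_PsiM (hM : M ≠ 0) : dilutionMap ρ' δ M (PsiM M) = ρ' := by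
  simp [dilutionMap_apply, PsiM_mul_self, trace_PsiM hM]

end DilutionMap

/-- explicit MIO dilution map. -/
theorem MIO_dilution_map {d M : ℕ} (hM : 2 ≤ M) (ρ' δ : Matrix (Fin d) (Fin d) ℂ)
    (hρ' : IsState ρ') (hδ : IsIncoherent δ) (hle : ((M : ℝ) • δ - ρ').PosSemidef) :
    ∃ Λ : Matrix (Fin M) (Fin M) ℂ →ₗ[ℂ] Matrix (Fin d) (Fin d) ℂ,
      (∀ ω, IsState ω → Λ ω = ((M : ℂ) / ((M : ℂ) - 1)) •
        (((PsiM M * ω).trace - 1 / (M : ℂ)) • ρ' + (1 - (PsiM M * ω).trace) • δ)) ∧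
      CompletelyPositive Λ ∧ TracePreserving Λ ∧
      (∀ δ₀, IsIncoherent δ₀ → IsIncoherent (Λ δ₀)) ∧
      Λ (PsiM M) = ρ' := by
  refine ⟨dilutionMap ρ' δ M, fun ω hω => dilutionMap_apply_of_trace_eq_one hM hω.2,
    completelyPositive_dilutionMap hρ'.1 (posSemidef_dilutionComplement hM hle),
    tracePreserving_dilutionMap hM hρ'.2 hδ.1.2, fun δ₀ hδ₀ => ?_, dilutionMap_PsiM (by omega)⟩
  rwa [dilutionMap_apply_of_isDiag hM hδ₀.2 hδ₀.1.2]

end OneShot
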